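/- The graph K_3 ∨ 3K_2 (join of a triangle with three disjoint edges) is d_1-choosable. -/

import Mathlib

/-!
The triangle vertices have lists of 7 colours, the six edge vertices lists of 3. Colour the three
disjoint edges first, using a set `F` of at most 6 colours; the triangle can then be coloured
from its lists minus `F` exactly when Hall's condition holds. A union of triangle lists has at
least 7 colours, and at least 8 unless two lists coincide, so Hall's condition can only fail on a
union `U` of at most 8 colours that `F` meets in more than `#U - 3` colours. All such unions
contain one set `P` of at least 7 colours (a repeated list, or the union of all lists), and a
pigeonhole argument on the edge lists colours the edges so that `F` misses at least three colours
of `P`: two edges share a colour, or an edge uses colours outside `P`.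
-/


open SimpleGraph

/-- A graph `H` is `d₁`-choosable: for every list assignment giving each vertex `v`
a list of `d_H(v) - 1` colors, there is a proper coloring from the lists. -/
def D1Choosable {W : Type*} (H : SimpleGraph W) : Prop :=
  ∀ L : W → Finset ℕ, (∀ v, (L v).card = (H.neighborSet v).ncard - 1) →
    ∃ φ : W → ℕ, (∀ v, φ v ∈ L v) ∧ ∀ u v, H.Adj u v → φ u ≠ φ v

/-- The graph `K₃ ∨ 3K₂`: a triangle joined to three disjoint edges.
Vertex `(i, a)` on the right lies in the `i`-th edge. -/
def K3Join3K2 : SimpleGraph (Fin 3 ⊕ Fin 3 × Fin 2) where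
  Adj x y :=
    match x, y with
    | .inl a, .inl b => a ≠ b
    | .inl _, .inr _ => True
    | .inr _, .inl _ => True
    | .inr a, .inr b => a.1 = b.1 ∧ a.2 ≠ b.2
  symm := by
    constructor
    rintro (a | a) (b | b) h
    · exact Ne.symm h
    · trivial
    · trivial
    · exact ⟨h.1.symm, h.2.symm⟩
  loopless := by
    constructor
    rintro (a | a) h
    · exact h rfl
    · exact h.2 rfl

open Finset Function

variable {α : Type*} [DecidableEq α]

lemma exists_not_subset_or_not_disjoint_of_card_lt_sum {ι : Type*} [Fintype ι]
    (X : ι → Finset α) {P : Finset α} (h : #P < ∑ i, #(X i)) :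
    (∃ i, ¬X i ⊆ P) ∨ ∃ i j, i ≠ j ∧ ¬Disjoint (X i) (X j) := by
  by_contra! hc
  obtain ⟨hsub, hdisj⟩ := hc
  have := card_le_card (biUnion_subset.2 fun i (_ : i ∈ univ) => hsub i)
  rw [card_biUnion fun i _ j _ hij => hdisj i j hij] at this
  omega

lemma not_subset_or_not_disjoint_of_card_lt {X Y Z P : Finset α} (h : #P < #X + #Y + #Z) :
    ¬X ⊆ P ∨ ¬Y ⊆ P ∨ ¬Z ⊆ P ∨ ¬Disjoint X Y ∨ ¬Disjoint X Z ∨ ¬Disjoint Y Z := by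
  by_contra! hc
  obtain ⟨hX, hY, hZ, hXY, hXZ, hYZ⟩ := hc
  have := card_le_card (union_subset (union_subset hX hY) hZ)
  rw [card_union_of_disjoint (disjoint_union_left.2 ⟨hXZ, hYZ⟩), card_union_of_disjoint hXY]
    at this
  omega

lemma le_card_union_of_ne {S T : Finset α} {n : ℕ} (hS : #S = n) (hT : #T = n) (h : S ≠ T) :
    n + 1 ≤ #(S ∪ T) := by
  by_contra! hlt
  have hSU := eq_of_subset_of_card_le (show S ⊆ S ∪ T from subset_union_left) (by omega)
  have hTU := eq_of_subset_of_card_le (show T ⊆ S ∪ T from subset_union_right) (by omega)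
  exact h (hSU.trans hTU.symm)

lemma Fin.exists_perm_three_apply_zero_apply_one :
    ∀ i j : Fin 3, i ≠ j → ∃ σ : Equiv.Perm (Fin 3), σ 0 = i ∧ σ 1 = j := by
  decide

/-- `S` is the set of colours of a proper colouring of an edge whose ends have lists `A`, `B`. -/
def IsColorPair (A B S : Finset α) : Prop :=
  ∃ c ∈ A, ∃ d ∈ B, c ≠ d ∧ S = {c, d}

section ColorPair

variable {A B : Finset α}

lemma IsColorPair.card_le {S : Finset α} (h : IsColorPair A B S) : #S ≤ 2 := by
  obtain ⟨c, -, d, -, -, rfl⟩ := h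
  exact card_le_two

lemma exists_isColorPair_partners (hA : 3 ≤ #A) (hB : 3 ≤ #B) {x : α} (hx : x ∈ A ∪ B) :
    ∃ O ⊆ (A ∪ B).erase x, 2 ≤ #O ∧ ∀ w ∈ O, IsColorPair A B {x, w} := by
  rcases mem_union.1 hx with hxA | hxB
  · refine ⟨B.erase x, erase_subset_erase _ subset_union_right,
      by grind [pred_card_le_card_erase], fun w hw => ?_⟩
    exact ⟨x, hxA, w, mem_of_mem_erase hw, (ne_of_mem_erase hw).symm, rfl⟩
  · refine ⟨A.erase x, erase_subset_erase _ subset_union_left,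
      by grind [pred_card_le_card_erase], fun w hw => ?_⟩
    exact ⟨w, mem_of_mem_erase hw, x, hxB, ne_of_mem_erase hw, pair_comm _ _⟩

lemma exists_isColorPair_insert (hA : 3 ≤ #A) (hB : 3 ≤ #B) {x : α} (hx : x ∈ A ∪ B) :
    ∃ w, IsColorPair A B {x, w} := by
  obtain ⟨O, -, hO, hpair⟩ := exists_isColorPair_partners hA hB hx
  obtain ⟨w, hw⟩ := card_pos.1 (by omega : 0 < #O)
  exact ⟨w, hpair w hw⟩

lemma exists_isColorPair (hA : 3 ≤ #A) (hB : 3 ≤ #B) : ∃ S, IsColorPair A B S := by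
  obtain ⟨x, hx⟩ := card_pos.1 (by omega : 0 < #A)
  obtain ⟨w, hw⟩ := exists_isColorPair_insert hA hB (mem_union_left B hx)
  exact ⟨_, hw⟩

lemma card_biUnion_le_of_isColorPair {ι : Type*} [Fintype ι] {A B S : ι → Finset α}
    (hS : ∀ i, IsColorPair (A i) (B i) (S i)) : #(univ.biUnion S) ≤ 2 * Fintype.card ι :=
  card_biUnion_le.trans <| by
    simpa [mul_comm] using sum_le_sum fun i (_ : i ∈ univ) => (hS i).card_le

end ColorPair

def HasColorPairsMeeting {ι : Type*} [Fintype ι] (A B : ι → Finset α) (P : Finset α)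
    (n : ℕ) : Prop :=
  ∃ S : ι → Finset α, (∀ i, IsColorPair (A i) (B i) (S i)) ∧ #(univ.biUnion S ∩ P) ≤ n

namespace HasColorPairsMeeting

section General

variable {ι : Type*} [Fintype ι] {A B : ι → Finset α} {P : Finset α} {n : ℕ}

lemma mono {m : ℕ} (h : HasColorPairsMeeting A B P n) (hnm : n ≤ m) :
    HasColorPairsMeeting A B P m :=
  let ⟨S, hS, hn⟩ := h
  ⟨S, hS, hn.trans hnm⟩

lemma of_perm (σ : Equiv.Perm ι) (h : HasColorPairsMeeting (A ∘ σ) (B ∘ σ) P n) :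
    HasColorPairsMeeting A B P n := by
  obtain ⟨S, hS, hn⟩ := h
  refine ⟨S ∘ σ.symm, fun i => by simpa using hS (σ.symm i), ?_⟩
  convert hn using 3
  ext a
  simp only [mem_biUnion, mem_univ, true_and, comp_apply]
  exact (σ.symm.surjective.exists (p := fun i => a ∈ S i)).symm

lemma of_two_mul_card (hA : ∀ i, 3 ≤ #(A i)) (hB : ∀ i, 3 ≤ #(B i)) :
    HasColorPairsMeeting A B P (2 * Fintype.card ι) := by
  choose S hS using fun i => exists_isColorPair (hA i) (hB i)
  exact ⟨S, hS, (card_le_card inter_subset_left).trans (card_biUnion_le_of_isColorPair hS)⟩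

end General

variable {A B : Fin 3 → Finset α} {P : Finset α}

lemma of_three {K S₀ S₁ S₂ : Finset α} {n : ℕ} (h₀ : IsColorPair (A 0) (B 0) S₀)
    (h₁ : IsColorPair (A 1) (B 1) S₁) (h₂ : IsColorPair (A 2) (B 2) S₂)
    (hK : (S₀ ∪ S₁ ∪ S₂) ∩ P ⊆ K) (hn : #K ≤ n) : HasColorPairsMeeting A B P n := by
  refine ⟨![S₀, S₁, S₂], fun i => by fin_cases i <;> assumption, (card_le_card ?_).trans hn⟩
  convert hK using 2
  ext a
  simp [Fin.exists_fin_succ]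

lemma nine_le_sum_card_union (hA : ∀ i, 3 ≤ #(A i)) : 9 ≤ ∑ i, #(A i ∪ B i) :=
  calc 9 = ∑ _i : Fin 3, 3 := by simp
    _ ≤ ∑ i, #(A i ∪ B i) := sum_le_sum fun i _ => (hA i).trans (card_le_card subset_union_left)

lemma five_of_mem_of_notMem (hA : ∀ i, 3 ≤ #(A i)) (hB : ∀ i, 3 ≤ #(B i)) {x : α}
    (hx : x ∈ A 0 ∪ B 0) (hxP : x ∉ P) : HasColorPairsMeeting A B P 5 := by
  obtain ⟨w, h₀⟩ := exists_isColorPair_insert (hA 0) (hB 0) hx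
  obtain ⟨S₁, h₁⟩ := exists_isColorPair (hA 1) (hB 1)
  obtain ⟨S₂, h₂⟩ := exists_isColorPair (hA 2) (hB 2)
  exact of_three h₀ h₁ h₂ (K := {w} ∪ S₁ ∪ S₂) (by grind)
    (by grind [card_union_le, card_singleton, h₁.card_le, h₂.card_le])

lemma five_of_mem_inter (hA : ∀ i, 3 ≤ #(A i)) (hB : ∀ i, 3 ≤ #(B i)) {x : α}
    (hx₀ : x ∈ A 0 ∪ B 0) (hx₁ : x ∈ A 1 ∪ B 1) : HasColorPairsMeeting A B P 5 := by
  obtain ⟨w₀, h₀⟩ := exists_isColorPair_insert (hA 0) (hB 0) hx₀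
  obtain ⟨w₁, h₁⟩ := exists_isColorPair_insert (hA 1) (hB 1) hx₁
  obtain ⟨S₂, h₂⟩ := exists_isColorPair (hA 2) (hB 2)
  exact of_three h₀ h₁ h₂ (K := {x, w₀, w₁} ∪ S₂) (by grind)
    (by grind [card_union_le, card_le_three, h₂.card_le])

lemma five_of_card_le_eight (hA : ∀ i, 3 ≤ #(A i)) (hB : ∀ i, 3 ≤ #(B i)) (hP : #P ≤ 8) :
    HasColorPairsMeeting A B P 5 := by
  have := nine_le_sum_card_union (B := B) hA
  rcases exists_not_subset_or_not_disjoint_of_card_lt_sum (fun i => A i ∪ B i) (P := P)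
      (by omega) with ⟨i, hi⟩ | ⟨i, j, hij, hij'⟩
  · obtain ⟨x, hx, hxP⟩ := not_subset.1 hi
    refine of_perm (Equiv.swap 0 i) (five_of_mem_of_notMem (A := A ∘ Equiv.swap 0 i)
      (fun _ => hA _) (fun _ => hB _) ?_ hxP)
    simpa using hx
  · obtain ⟨σ, rfl, rfl⟩ := Fin.exists_perm_three_apply_zero_apply_one i j hij
    obtain ⟨x, hx₀, hx₁⟩ := not_disjoint_iff.1 hij'
    exact of_perm σ (five_of_mem_inter (A := A ∘ σ) (fun _ => hA _) (fun _ => hB _) hx₀ hx₁)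

lemma four_of_mem_inter_of_mem (hA : ∀ i, 3 ≤ #(A i)) (hB : ∀ i, 3 ≤ #(B i)) (hP : #P ≤ 7)
    {x : α} (hx₀ : x ∈ A 0 ∪ B 0) (hx₁ : x ∈ A 1 ∪ B 1) (hxP : x ∈ P) :
    HasColorPairsMeeting A B P 4 := by
  obtain ⟨O₀, hO₀, hO₀c, hO₀p⟩ := exists_isColorPair_partners (hA 0) (hB 0) hx₀
  obtain ⟨O₁, hO₁, hO₁c, hO₁p⟩ := exists_isColorPair_partners (hA 1) (hB 1) hx₁
  obtain ⟨w₀, hw₀⟩ := card_pos.1 (by omega : 0 < #O₀)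
  obtain ⟨w₁, hw₁⟩ := card_pos.1 (by omega : 0 < #O₁)
  obtain ⟨S₂, h₂⟩ := exists_isColorPair (hA 2) (hB 2)
  have hU₂ : 3 ≤ #(A 2 ∪ B 2) := (hA 2).trans (card_le_card subset_union_left)
  rcases not_subset_or_not_disjoint_of_card_lt (X := O₀) (Y := O₁) (Z := A 2 ∪ B 2)
      (P := P.erase x) (by rw [card_erase_of_mem hxP]; omega) with h | h | h | h | h | h
  · obtain ⟨w, hw, hwP⟩ := not_subset.1 h
    have := hO₀ hw
    exact of_three (hO₀p w hw) (hO₁p w₁ hw₁) h₂ (K := {x, w₁} ∪ S₂) (by grind)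
      (by grind [card_union_le, card_le_two, h₂.card_le])
  · obtain ⟨w, hw, hwP⟩ := not_subset.1 h
    have := hO₁ hw
    exact of_three (hO₀p w₀ hw₀) (hO₁p w hw) h₂ (K := {x, w₀} ∪ S₂) (by grind)
      (by grind [card_union_le, card_le_two, h₂.card_le])
  · obtain ⟨y, hy, hyP⟩ := not_subset.1 h
    obtain ⟨w₂, h₂⟩ := exists_isColorPair_insert (hA 2) (hB 2) hy
    exact of_three (hO₀p w₀ hw₀) (hO₁p w₁ hw₁) h₂ (K := {x, w₀, w₁, w₂}) (by grind)
      card_le_four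
  · obtain ⟨w, hw₀, hw₁⟩ := not_disjoint_iff.1 h
    exact of_three (hO₀p w hw₀) (hO₁p w hw₁) h₂ (K := {x, w} ∪ S₂) (by grind)
      (by grind [card_union_le, card_le_two, h₂.card_le])
  · obtain ⟨z, hz₀, hz₂⟩ := not_disjoint_iff.1 h
    obtain ⟨w₂, h₂⟩ := exists_isColorPair_insert (hA 2) (hB 2) hz₂
    exact of_three (hO₀p z hz₀) (hO₁p w₁ hw₁) h₂ (K := {x, z, w₁, w₂}) (by grind)
      card_le_four
  · obtain ⟨z, hz₁, hz₂⟩ := not_disjoint_iff.1 h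
    obtain ⟨w₂, h₂⟩ := exists_isColorPair_insert (hA 2) (hB 2) hz₂
    exact of_three (hO₀p w₀ hw₀) (hO₁p z hz₁) h₂ (K := {x, z, w₀, w₂}) (by grind)
      card_le_four

lemma four_of_mem_inter (hA : ∀ i, 3 ≤ #(A i)) (hB : ∀ i, 3 ≤ #(B i)) (hP : #P ≤ 7)
    {x : α} (hx₀ : x ∈ A 0 ∪ B 0) (hx₁ : x ∈ A 1 ∪ B 1) : HasColorPairsMeeting A B P 4 := by
  by_cases hxP : x ∈ P
  · exact four_of_mem_inter_of_mem hA hB hP hx₀ hx₁ hxP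
  obtain ⟨w₀, h₀⟩ := exists_isColorPair_insert (hA 0) (hB 0) hx₀
  obtain ⟨w₁, h₁⟩ := exists_isColorPair_insert (hA 1) (hB 1) hx₁
  obtain ⟨S₂, h₂⟩ := exists_isColorPair (hA 2) (hB 2)
  exact of_three h₀ h₁ h₂ (K := {w₀, w₁} ∪ S₂) (by grind)
    (by grind [card_union_le, card_le_two, h₂.card_le])

lemma four_of_pairwise_disjoint (hA : ∀ i, 3 ≤ #(A i)) (hB : ∀ i, 3 ≤ #(B i)) (hP : #P ≤ 7)
    (hdisj : ∀ i j, i ≠ j → Disjoint (A i ∪ B i) (A j ∪ B j)) {x : α} (hx : x ∈ A 2 ∪ B 2)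
    (hxP : x ∉ P) : HasColorPairsMeeting A B P 4 := by
  obtain ⟨O, hO, hOc, hOp⟩ := exists_isColorPair_partners (hA 2) (hB 2) hx
  obtain ⟨w₂, hw₂⟩ := card_pos.1 (by omega : 0 < #O)
  obtain ⟨S₀, h₀⟩ := exists_isColorPair (hA 0) (hB 0)
  obtain ⟨S₁, h₁⟩ := exists_isColorPair (hA 1) (hB 1)
  have hO₂ : O ⊆ A 2 ∪ B 2 := hO.trans (erase_subset _ _)
  have hU₀ : 3 ≤ #(A 0 ∪ B 0) := (hA 0).trans (card_le_card subset_union_left)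
  have hU₁ : 3 ≤ #(A 1 ∪ B 1) := (hA 1).trans (card_le_card subset_union_left)
  rcases not_subset_or_not_disjoint_of_card_lt (X := A 0 ∪ B 0) (Y := A 1 ∪ B 1) (Z := O)
      (P := P) (by omega) with h | h | h | h | h | h
  · obtain ⟨y, hy, hyP⟩ := not_subset.1 h
    obtain ⟨w₀, h₀⟩ := exists_isColorPair_insert (hA 0) (hB 0) hy
    exact of_three h₀ h₁ (hOp w₂ hw₂) (K := {w₀, w₂} ∪ S₁) (by grind)
      (by grind [card_union_le, card_le_two, h₁.card_le])
  · obtain ⟨y, hy, hyP⟩ := not_subset.1 h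
    obtain ⟨w₁, h₁⟩ := exists_isColorPair_insert (hA 1) (hB 1) hy
    exact of_three h₀ h₁ (hOp w₂ hw₂) (K := {w₁, w₂} ∪ S₀) (by grind)
      (by grind [card_union_le, card_le_two, h₀.card_le])
  · obtain ⟨w, hw, hwP⟩ := not_subset.1 h
    exact of_three h₀ h₁ (hOp w hw) (K := S₀ ∪ S₁) (by grind)
      (by grind [card_union_le, h₀.card_le, h₁.card_le])
  · exact absurd (hdisj 0 1 (by decide)) h
  · exact absurd ((hdisj 0 2 (by decide)).mono_right hO₂) h
  · exact absurd ((hdisj 1 2 (by decide)).mono_right hO₂) h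

lemma four_of_card_le_seven (hA : ∀ i, 3 ≤ #(A i)) (hB : ∀ i, 3 ≤ #(B i)) (hP : #P ≤ 7) :
    HasColorPairsMeeting A B P 4 := by
  by_cases hshared : ∃ i j, i ≠ j ∧ ¬Disjoint (A i ∪ B i) (A j ∪ B j)
  · obtain ⟨i, j, hij, hij'⟩ := hshared
    obtain ⟨σ, rfl, rfl⟩ := Fin.exists_perm_three_apply_zero_apply_one i j hij
    obtain ⟨x, hx₀, hx₁⟩ := not_disjoint_iff.1 hij'
    exact of_perm σ
      (four_of_mem_inter (A := A ∘ σ) (fun _ => hA _) (fun _ => hB _) hP hx₀ hx₁)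
  have hdisj : ∀ i j, i ≠ j → Disjoint (A i ∪ B i) (A j ∪ B j) :=
    fun i j hij => by_contra fun h => hshared ⟨i, j, hij, h⟩
  have := nine_le_sum_card_union (B := B) hA
  obtain ⟨i, hi⟩ := (exists_not_subset_or_not_disjoint_of_card_lt_sum (fun i => A i ∪ B i)
    (P := P) (by omega)).resolve_right hshared
  obtain ⟨x, hx, hxP⟩ := not_subset.1 hi
  refine of_perm (Equiv.swap 2 i) (four_of_pairwise_disjoint (A := A ∘ Equiv.swap 2 i)
    (fun _ => hA _) (fun _ => hB _) hP
    (fun k l hkl => hdisj _ _ ((Equiv.swap 2 i).injective.ne hkl)) ?_ hxP)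
  simpa using hx

end HasColorPairsMeeting

lemma exists_isColorPair_three_le_card_sdiff {A B : Fin 3 → Finset α} {P : Finset α}
    (hA : ∀ i, 3 ≤ #(A i)) (hB : ∀ i, 3 ≤ #(B i)) (hP : 7 ≤ #P) :
    ∃ S : Fin 3 → Finset α, (∀ i, IsColorPair (A i) (B i) (S i)) ∧
      3 ≤ #(P \ univ.biUnion S) := by
  have hmeet : HasColorPairsMeeting A B P (#P - 3) := by
    rcases (show #P = 7 ∨ #P = 8 ∨ 9 ≤ #P by omega) with h | h | h
    · exact (HasColorPairsMeeting.four_of_card_le_seven hA hB h.le).mono (by omega)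
    · exact (HasColorPairsMeeting.five_of_card_le_eight hA hB h.le).mono (by omega)
    · exact (HasColorPairsMeeting.of_two_mul_card hA hB).mono
        (by simp only [Fintype.card_fin]; omega)
  obtain ⟨S, hS, hn⟩ := hmeet
  refine ⟨S, hS, ?_⟩
  have := card_sdiff_add_card_inter P (univ.biUnion S)
  rw [inter_comm] at hn
  omega

lemma exists_injective_mem_sdiff {ι : Type*} [Fintype ι] [DecidableEq ι] (T : ι → Finset α)
    {F P : Finset α} {m : ℕ} (hF : #F ≤ m) (hP : Fintype.card ι ≤ #(P \ F))
    (hT : ∀ s : Finset ι, s.Nonempty → #s + m ≤ #(s.biUnion T) ∨ P ⊆ s.biUnion T) :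
    ∃ t : ι → α, Injective t ∧ ∀ i, t i ∈ T i \ F := by
  refine (all_card_le_biUnion_card_iff_exists_injective fun i => T i \ F).1 fun s => ?_
  rcases s.eq_empty_or_nonempty with rfl | hs
  · simp
  have hsdiff : s.biUnion (fun i => T i \ F) = s.biUnion T \ F := by
    ext a
    simp only [mem_biUnion, mem_sdiff]
    grind
  rw [hsdiff]
  rcases hT s hs with h | h
  · have := le_card_sdiff F (s.biUnion T)
    omega
  · exact (card_le_univ s).trans (hP.trans (card_le_card (sdiff_subset_sdiff h le_rfl)))

/-- `P` lies in every union of lists that could violate Hall's condition once six colours are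
removed from the lists. -/
lemma exists_hall_core (T : Fin 3 → Finset α) (hT : ∀ i, #(T i) = 7) :
    ∃ P, 7 ≤ #P ∧ ∀ s : Finset (Fin 3), s.Nonempty →
      #s + 6 ≤ #(s.biUnion T) ∨ P ⊆ s.biUnion T := by
  have h7 : ∀ s : Finset (Fin 3), s.Nonempty → 7 ≤ #(s.biUnion T) := fun s ⟨i, hi⟩ =>
    (hT i).ge.trans (card_le_card (subset_biUnion_of_mem T hi))
  by_cases hrep : ∃ i j, i ≠ j ∧ T i = T j
  · obtain ⟨i, j, hij, hTij⟩ := hrep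
    refine ⟨T i, (hT i).ge, fun s hs => or_iff_not_imp_right.2 fun hsub => ?_⟩
    have hi : i ∉ s := fun h => hsub (subset_biUnion_of_mem T h)
    have hj : j ∉ s := fun h => hsub (hTij ▸ subset_biUnion_of_mem T h)
    have hcard := card_le_univ (insert i (insert j s))
    rw [card_insert_of_notMem (by simp [hij, hi]), card_insert_of_notMem hj] at hcard
    simp only [Fintype.card_fin] at hcard
    have := h7 s hs
    omega
  · refine ⟨univ.biUnion T, h7 univ univ_nonempty, fun s hs => ?_⟩
    by_cases hs3 : s = univ
    · exact Or.inr (hs3 ▸ subset_refl _)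
    left
    have hcard := card_lt_card (ssubset_univ_iff.2 hs3)
    simp only [card_univ, Fintype.card_fin] at hcard
    rcases (show #s = 1 ∨ #s = 2 by have := hs.card_pos; omega) with h | h
    · have := h7 s hs
      omega
    · obtain ⟨i, j, hij, rfl⟩ := card_eq_two.1 h
      have := le_card_union_of_ne (hT i) (hT j) fun h => hrep ⟨i, j, hij, h⟩
      simpa [h] using this

instance : DecidableRel K3Join3K2.Adj := fun x y =>
  match x, y with
  | .inl a, .inl b => inferInstanceAs (Decidable (a ≠ b))
  | .inl _, .inr _ => inferInstanceAs (Decidable True)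
  | .inr _, .inl _ => inferInstanceAs (Decidable True)
  | .inr a, .inr b => inferInstanceAs (Decidable (a.1 = b.1 ∧ a.2 ≠ b.2))

lemma K3Join3K2.ncard_neighborSet_inl (a : Fin 3) :
    (K3Join3K2.neighborSet (.inl a)).ncard = 8 := by
  rw [neighborSet, Set.ncard_eq_toFinset_card']
  revert a
  decide

lemma K3Join3K2.ncard_neighborSet_inr (p : Fin 3 × Fin 2) :
    (K3Join3K2.neighborSet (.inr p)).ncard = 4 := by
  rw [neighborSet, Set.ncard_eq_toFinset_card']
  revert p
  decide

lemma K3Join3K2.sum_elim_ne_of_adj {β : Type*} {t : Fin 3 → β} {e : Fin 3 × Fin 2 → β}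
    (ht : Injective t) (hte : ∀ a p, t a ≠ e p) (he : ∀ i, e (i, 0) ≠ e (i, 1))
    {u v : Fin 3 ⊕ Fin 3 × Fin 2} (h : K3Join3K2.Adj u v) :
    Sum.elim t e u ≠ Sum.elim t e v := by
  rcases u with a | ⟨i, j⟩ <;> rcases v with b | ⟨k, l⟩
  · exact ht.ne h
  · exact hte a (k, l)
  · exact (hte b (i, j)).symm
  · obtain ⟨rfl, hjl⟩ := h
    fin_cases j <;> fin_cases l
    exacts [absurd rfl hjl, he i, (he i).symm, absurd rfl hjl]

theorem stmt11 : D1Choosable K3Join3K2 := by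
  intro L hL
  have hT : ∀ a, #(L (.inl a)) = 7 := fun a => by rw [hL, K3Join3K2.ncard_neighborSet_inl]
  have hE : ∀ p, 3 ≤ #(L (.inr p)) := fun p => by rw [hL, K3Join3K2.ncard_neighborSet_inr]
  obtain ⟨P, hP, hcore⟩ := exists_hall_core _ hT
  obtain ⟨S, hS, hfree⟩ := exists_isColorPair_three_le_card_sdiff
    (A := fun i => L (.inr (i, 0))) (B := fun i => L (.inr (i, 1))) (fun _ => hE _)
    (fun _ => hE _) hP
  obtain ⟨t, ht, htL⟩ := exists_injective_mem_sdiff _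
    ((card_biUnion_le_of_isColorPair hS).trans_eq rfl) (by simpa using hfree) hcore
  choose c hc d hd hcd hSeq using hS
  let e : Fin 3 × Fin 2 → ℕ := fun p => ![c p.1, d p.1] p.2
  have he : ∀ p, e p ∈ L (.inr p) ∧ e p ∈ univ.biUnion S := by
    rintro ⟨i, j⟩
    fin_cases j
    · exact ⟨hc i, mem_biUnion.2 ⟨i, mem_univ _, by simp [e, hSeq]⟩⟩
    · exact ⟨hd i, mem_biUnion.2 ⟨i, mem_univ _, by simp [e, hSeq]⟩⟩
  refine ⟨Sum.elim t e, ?_, fun u v => K3Join3K2.sum_elim_ne_of_adj ht ?_ hcd⟩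
  · rintro (a | p)
    exacts [(mem_sdiff.1 (htL a)).1, (he p).1]
  · exact fun a p h => (mem_sdiff.1 (htL a)).2 (h ▸ (he p).2)
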